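/- arXiv:1501.06756 — 2 statements merged into one kernel-verified Lean document; each statement's English description precedes it below -/
import Mathlib

section
/- For n ≥ 3, the assignments t_{σ_i} ↦ g_{σ_i} (1 ≤ i ≤ n−1) and t_{a_n} ↦ g_{σ_n} g_{a_{n+1}} g_{σ_n}^{−1} respect all the defining relations of TL̂_n(q) inside TL̂_{n+1}(q), and hence extend to a unital K-algebra homomorphism F_n : TL̂_n(q) → TL̂_{n+1}(q). Likewise for n = 2, the assignments t_{σ_1} ↦ g_{σ_1} and t_{a_2} ↦ g_{σ_2} g_{a_3} g_{σ_2}^{−1} extend to a unital K-algebra homomorphism F_2 : TL̂_2(q) → TL̂_3(q). -/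
open FreeAlgebra

/-- `V(x,y) = x y x + x y + y x + x + y + 1`. -/
def Vel {R : Type*} [Ring R] (x y : R) : R :=
  x * y * x + x * y + y * x + x + y + 1

/-- Defining relations of the affine Temperley–Lieb algebra `TL̂_{n+1}(q)` of type `Ã_n`.
Generators are indexed by `Fin (n+1)`: for `i < n` the index `i` stands for `g_{σ_{i+1}}`,
and the index `n` (i.e. `Fin.last n`) stands for `g_{a_{n+1}}`.  For `n = 1` only the
quadratic relations remain, so `TLhat K q 1` is `TL̂_2(q)` (with generators
`t_{σ_1} = g 0` and `t_{a_2} = g 1`). -/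
inductive ATLRel (K : Type*) [CommRing K] (q : K) (n : ℕ) :
    FreeAlgebra K (Fin (n + 1)) → FreeAlgebra K (Fin (n + 1)) → Prop
  | quad (i : Fin (n + 1)) :
      ATLRel K q n (ι K i * ι K i) ((q - 1) • ι K i + algebraMap K _ q)
  | comm_ss (i j : Fin (n + 1)) (hi : (i : ℕ) < n) (hj : (j : ℕ) < n)
      (hd : 2 ≤ Nat.dist (i : ℕ) (j : ℕ)) :
      ATLRel K q n (ι K i * ι K j) (ι K j * ι K i)
  | comm_sa (hn : 2 ≤ n) (i : Fin (n + 1)) (h1 : 1 ≤ (i : ℕ)) (h2 : (i : ℕ) + 2 ≤ n) :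
      ATLRel K q n (ι K i * ι K (Fin.last n)) (ι K (Fin.last n) * ι K i)
  | braid_ss (i j : Fin (n + 1)) (hj : (j : ℕ) < n) (hij : (j : ℕ) = (i : ℕ) + 1) :
      ATLRel K q n (ι K i * ι K j * ι K i) (ι K j * ι K i * ι K j)
  | braid_sa (hn : 2 ≤ n) (i : Fin (n + 1)) (h : (i : ℕ) = 0 ∨ (i : ℕ) + 1 = n) :
      ATLRel K q n (ι K i * ι K (Fin.last n) * ι K i)
        (ι K (Fin.last n) * ι K i * ι K (Fin.last n))
  | v_ss (i j : Fin (n + 1)) (hj : (j : ℕ) < n) (hij : (j : ℕ) = (i : ℕ) + 1) :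
      ATLRel K q n (Vel (ι K i) (ι K j)) 0
  | v_s1a (hn : 2 ≤ n) (i : Fin (n + 1)) (hi : (i : ℕ) = 0) :
      ATLRel K q n (Vel (ι K i) (ι K (Fin.last n))) 0
  | v_sna (hn : 2 ≤ n) (i : Fin (n + 1)) (hi : (i : ℕ) + 1 = n) :
      ATLRel K q n (Vel (ι K i) (ι K (Fin.last n))) 0

/-- The affine Temperley–Lieb algebra `TL̂_{n+1}(q)`. -/
abbrev TLhat (K : Type*) [CommRing K] (q : K) (n : ℕ) :=
  RingQuot (ATLRel K q n)

/-- Defining relations of the type `A` Temperley–Lieb algebra `TL_n(q)` with `n`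
generators `g_{σ_1}, …, g_{σ_n}`; index `i : Fin n` stands for `g_{σ_{i+1}}`. -/
inductive TLARel (K : Type*) [CommRing K] (q : K) (n : ℕ) :
    FreeAlgebra K (Fin n) → FreeAlgebra K (Fin n) → Prop
  | quad (i : Fin n) :
      TLARel K q n (ι K i * ι K i) ((q - 1) • ι K i + algebraMap K _ q)
  | comm (i j : Fin n) (hd : 2 ≤ Nat.dist (i : ℕ) (j : ℕ)) :
      TLARel K q n (ι K i * ι K j) (ι K j * ι K i)
  | braid (i j : Fin n) (hij : (j : ℕ) = (i : ℕ) + 1) :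
      TLARel K q n (ι K i * ι K j * ι K i) (ι K j * ι K i * ι K j)
  | vrel (i j : Fin n) (hij : (j : ℕ) = (i : ℕ) + 1) :
      TLARel K q n (Vel (ι K i) (ι K j)) 0

/-- The Temperley–Lieb algebra `TL_n(q)` of type `A` (abstract presentation). -/
abbrev TLA (K : Type*) [CommRing K] (q : K) (n : ℕ) :=
  RingQuot (TLARel K q n)

variable (K : Type*) [CommRing K] (q : K) (n : ℕ)

/-- The generator `g_i` of `TL̂_{n+1}(q)`. -/
noncomputable def gg (i : Fin (n + 1)) : TLhat K q n :=
  RingQuot.mkAlgHom K (ATLRel K q n) (ι K i)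

/-- The inverse `q⁻¹ (g_i - (q-1))` of the generator `g_i` of `TL̂_{n+1}(q)`. -/
noncomputable def ggInv [Invertible q] (i : Fin (n + 1)) : TLhat K q n :=
  ⅟q • (gg K q n i - algebraMap K _ (q - 1))

/-- The generator `g_{σ_{i+1}}` of `TL_n(q)`. -/
noncomputable def ga (i : Fin n) : TLA K q n :=
  RingQuot.mkAlgHom K (TLARel K q n) (ι K i)

/-- The inverse `q⁻¹ (g - (q-1))` of a generator of `TL_n(q)`. -/
noncomputable def gaInv [Invertible q] (i : Fin n) : TLA K q n :=
  ⅟q • (ga K q n i - algebraMap K _ (q - 1))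

/-- The index of `g_{σ_n}` in `TL̂_{n+1}(q)`. -/
def sigmaTop : Fin (n + 1) := ⟨n - 1, Nat.lt_succ_of_le (Nat.sub_le n 1)⟩

/-- The index of `g_{σ_{n-1}}` in `TL̂_{n+1}(q)`. -/
def sigmaSub : Fin (n + 1) := ⟨n - 2, Nat.lt_succ_of_le (Nat.sub_le n 2)⟩

/-- `F` is the canonical homomorphism `F_n : TL̂_n(q) → TL̂_{n+1}(q)`, determined by
`t_{σ_i} ↦ g_{σ_i}` for `1 ≤ i ≤ n-1` and `t_{a_n} ↦ g_{σ_n} g_{a_{n+1}} g_{σ_n}⁻¹`. -/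
def IsF [Invertible q] (F : TLhat K q (n - 1) →ₐ[K] TLhat K q n) : Prop :=
  (∀ i : Fin (n - 1 + 1), (i : ℕ) < n - 1 →
      F (gg K q (n - 1) i) =
        gg K q n (Fin.castLE (Nat.succ_le_succ (Nat.sub_le n 1)) i)) ∧
  F (gg K q (n - 1) (Fin.last (n - 1))) =
    gg K q n (sigmaTop n) * gg K q n (Fin.last n) * ggInv K q n (sigmaTop n)

/-- Markov elements: `A g_{σ_n}^ε B` with `A, B` in the image of `F_n` and `ε ∈ {0,1}`. -/
def IsMarkov [Invertible q] (F : TLhat K q (n - 1) →ₐ[K] TLhat K q n)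
    (x : TLhat K q n) : Prop :=
  ∃ A B : TLhat K q (n - 1), ∃ ε : ℕ, ε ≤ 1 ∧
    x = F A * gg K q n (sigmaTop n) ^ ε * F B

/-- A trace on a `K`-algebra `R`: a `K`-linear map with `τ(xy) = τ(yx)`. -/
def IsTrace {R : Type*} [Ring R] [Algebra K R] (τ : R →ₗ[K] K) : Prop :=
  ∀ x y : R, τ (x * y) = τ (y * x)

/-- The Dynkin automorphism `ψ` of `TL̂_{n+1}(q)`: `g_i ↦ g_{i+1}` cyclically, i.e.
`g_{σ_1} ↦ g_{σ_2} ↦ ⋯ ↦ g_{σ_n} ↦ g_{a_{n+1}} ↦ g_{σ_1}`. -/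
def IsDynkin (ψ : TLhat K q n ≃ₐ[K] TLhat K q n) : Prop :=
  ∀ i : Fin (n + 1), ψ (gg K q n i) = gg K q n (i + 1)

/-- `X = g_{σ_n} g_{σ_{n-1}} ⋯ g_{σ_1} g_{a_{n+1}}`. -/
noncomputable def Xel : TLhat K q n :=
  (List.ofFn fun t : Fin n =>
      gg K q n ⟨n - 1 - (t : ℕ),
        Nat.lt_succ_of_le (le_trans (Nat.sub_le _ _) (Nat.sub_le _ _))⟩).prod *
    gg K q n (Fin.last n)

/-- `Z = g_{σ_{n-1}} g_{σ_{n-2}} ⋯ g_{σ_1} · F_n(t_{a_n})`. -/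
noncomputable def Zel [Invertible q] (F : TLhat K q (n - 1) →ₐ[K] TLhat K q n) :
    TLhat K q n :=
  (List.ofFn fun t : Fin (n - 1) =>
      gg K q n ⟨n - 2 - (t : ℕ),
        Nat.lt_succ_of_le (le_trans (Nat.sub_le _ _) (Nat.sub_le _ _))⟩).prod *
    F (gg K q (n - 1) (Fin.last (n - 1)))

/-- `g_{σ_n} g_{σ_{n-1}} ⋯ g_{σ_i}`, with the convention that it is `1` when `i = n + 1`. -/
noncomputable def tailChain (i : ℕ) : TLhat K q n :=
  (List.ofFn fun t : Fin (n + 1 - i) =>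
      gg K q n ⟨n - 1 - (t : ℕ),
        Nat.lt_succ_of_le (le_trans (Nat.sub_le _ _) (Nat.sub_le _ _))⟩).prod

/-- `g_{σ_{i₀}} g_{σ_{i₀ - 1}} ⋯ g_{σ_1}`, with the convention that it is `1` when `i₀ = 0`. -/
noncomputable def headChain (i₀ : ℕ) (h : i₀ ≤ n) : TLhat K q n :=
  (List.ofFn fun t : Fin i₀ =>
      gg K q n ⟨i₀ - 1 - (t : ℕ),
        Nat.lt_succ_of_le (le_trans (le_trans (Nat.sub_le _ _) (Nat.sub_le _ _)) h)⟩).prod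

/-- `TL_n(q)` realized as the subalgebra of `TL̂_{n+1}(q)` generated by `g_{σ_1}, …, g_{σ_n}`. -/
noncomputable def TLsub : Subalgebra K (TLhat K q n) :=
  Algebra.adjoin K (Set.range fun i : Fin n => gg K q n (Fin.castSucc i))

/-- The generator `g_{σ_{i+1}}` as an element of the subalgebra `TL_n(q)`. -/
noncomputable def sgen (i : Fin n) : TLsub K q n :=
  ⟨gg K q n (Fin.castSucc i), Algebra.subset_adjoin (Set.mem_range_self i)⟩

/-- The inverse `q⁻¹ (g - (q-1))` of `sgen` inside `TL_n(q)`. -/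
noncomputable def sgenInv [Invertible q] (i : Fin n) : TLsub K q n :=
  ⅟q • (sgen K q n i - algebraMap K _ (q - 1))

/-- `g_{σ_1} ⋯ g_{σ_{n-1}} g_{σ_n} g_{σ_{n-1}}⁻¹ ⋯ g_{σ_1}⁻¹` in `TL̂_{n+1}(q)`. -/
noncomputable def EnTarget [Invertible q] : TLhat K q n :=
  (List.ofFn fun t : Fin (n - 1) =>
      gg K q n (Fin.castLE (le_trans (Nat.sub_le n 1) (Nat.le_succ n)) t)).prod *
    gg K q n (sigmaTop n) *
    (List.ofFn fun t : Fin (n - 1) =>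
      ggInv K q n ⟨n - 2 - (t : ℕ),
        Nat.lt_succ_of_le (le_trans (Nat.sub_le _ _) (Nat.sub_le _ _))⟩).prod

/-- `E` is the canonical homomorphism `E_n : TL̂_{n+1}(q) → TL_n(q)`, determined by
`g_{σ_i} ↦ g_{σ_i}` for `1 ≤ i ≤ n` and
`g_{a_{n+1}} ↦ g_{σ_1} ⋯ g_{σ_{n-1}} g_{σ_n} g_{σ_{n-1}}⁻¹ ⋯ g_{σ_1}⁻¹`. -/
def IsE [Invertible q] (E : TLhat K q n →ₐ[K] TLsub K q n) : Prop :=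
  (∀ i : Fin n,
    (E (gg K q n (Fin.castSucc i)) : TLhat K q n) = gg K q n (Fin.castSucc i)) ∧
  (E (gg K q n (Fin.last n)) : TLhat K q n) = EnTarget K q n


section FnAuxGeneric

variable {Kc : Type*} [CommRing Kc] {R : Type*} [Ring R] [Algebra Kc R]

/-- Conjugation by an invertible element, as a `K`-algebra homomorphism. -/
noncomputable def fnConj (v vi : R) (hvvi : v * vi = 1) (hviv : vi * v = 1) :
    R →ₐ[Kc] R where
  toFun x := v * x * vi
  map_one' := by show v * 1 * vi = 1; rw [mul_one, hvvi]
  map_mul' x y := by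
    show v * (x * y) * vi = (v * x * vi) * (v * y * vi)
    simp only [mul_assoc]
    rw [← mul_assoc vi v, hviv, one_mul]
  map_zero' := by show v * 0 * vi = 0; rw [mul_zero, zero_mul]
  map_add' x y := by
    show v * (x + y) * vi = v * x * vi + v * y * vi
    rw [mul_add, add_mul]
  commutes' r := by
    show v * algebraMap Kc R r * vi = algebraMap Kc R r
    rw [← Algebra.commutes r v, mul_assoc, hvvi, mul_one]

lemma fnConj_apply (v vi : R) (hvvi : v * vi = 1) (hviv : vi * v = 1) (x : R) :
    fnConj (Kc := Kc) v vi hvvi hviv x = v * x * vi := rfl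

lemma fnConj_fixed {v vi : R} (hvvi : v * vi = 1) (hviv : vi * v = 1) {x : R}
    (hx : v * x = x * v) : fnConj (Kc := Kc) v vi hvvi hviv x = x := by
  show v * x * vi = x
  rw [hx, mul_assoc, hvvi, mul_one]

lemma fnConj_conj {v vi : R} (hvvi : v * vi = 1) (hviv : vi * v = 1) (x : R) :
    fnConj (Kc := Kc) v vi hvvi hviv (fnConj (Kc := Kc) vi v hviv hvvi x) = x := by
  show v * (vi * x * v) * vi = x
  rw [mul_assoc, mul_assoc, hvvi, mul_one, ← mul_assoc, hvvi, one_mul]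

lemma fnMap_Vel {S : Type*} [Ring S] [Algebra Kc S] (φ : R →ₐ[Kc] S) (x y : R) :
    φ (Vel x y) = Vel (φ x) (φ y) := by
  simp [Vel, map_add, map_mul, map_one]

lemma fn_left_cancel {R : Type*} [Ring R] {g gi x y : R} (h : gi * g = 1)
    (hxy : g * x = g * y) : x = y := by
  calc x = gi * (g * x) := by rw [← mul_assoc, h, one_mul]
    _ = gi * (g * y) := by rw [hxy]
    _ = y := by rw [← mul_assoc, h, one_mul]

lemma fn_comm_inv {R : Type*} [Ring R] {g gi x : R} (h1 : g * gi = 1) (h2 : gi * g = 1)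
    (hx : x * g = g * x) : x * gi = gi * x := by
  have e : x * gi = gi * (g * x * gi) := by
    rw [← mul_assoc, ← mul_assoc, h2, one_mul]
  rw [e, ← hx, mul_assoc, h1, mul_one]

lemma fn_quad_inv_right (q : Kc) [Invertible q] {g : R}
    (hg : g * g = (q - 1) • g + algebraMap Kc R q) :
    g * (⅟q • (g - algebraMap Kc R (q - 1))) = 1 := by
  rw [mul_smul_comm, mul_sub, hg, ← Algebra.commutes (q - 1) g, ← Algebra.smul_def,
    add_sub_cancel_left, Algebra.smul_def, ← map_mul, invOf_mul_self, map_one]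

lemma fn_quad_inv_left (q : Kc) [Invertible q] {g : R}
    (hg : g * g = (q - 1) • g + algebraMap Kc R q) :
    (⅟q • (g - algebraMap Kc R (q - 1))) * g = 1 := by
  rw [smul_mul_assoc, sub_mul, hg, ← Algebra.smul_def,
    add_sub_cancel_left, Algebra.smul_def, ← map_mul, invOf_mul_self, map_one]

lemma fn_quad_key (q : Kc) {v vi a : R} (hv1 : v * vi = 1) (hv2 : vi * v = 1)
    (ha : a * a = (q - 1) • a + algebraMap Kc R q) :
    (v * a * vi) * (v * a * vi) = (q - 1) • (v * a * vi) + algebraMap Kc R q := by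
  calc (v * a * vi) * (v * a * vi) = fnConj (Kc := Kc) v vi hv1 hv2 (a * a) := by
        rw [map_mul, fnConj_apply]
    _ = (q - 1) • fnConj (Kc := Kc) v vi hv1 hv2 a + algebraMap Kc R q := by
        rw [ha, map_add, map_smul, AlgHom.commutes]
    _ = (q - 1) • (v * a * vi) + algebraMap Kc R q := by rw [fnConj_apply]

lemma fn_comm_key {R : Type*} [Ring R] {x v a vi : R} (h1 : x * v = v * x)
    (h2 : x * a = a * x) (h3 : x * vi = vi * x) :
    x * (v * a * vi) = (v * a * vi) * x := by
  simp only [mul_assoc]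
  rw [← mul_assoc x v, h1, mul_assoc, ← mul_assoc x a, h2, mul_assoc, h3]

lemma fn_braid_key0 {Kc R : Type*} [CommRing Kc] [Ring R] [Algebra Kc R] {x v vi a : R} (hv1 : v * vi = 1) (hv2 : vi * v = 1)
    (hxv : x * v = v * x) (hbr : x * a * x = a * x * a) :
    x * (v * a * vi) * x = (v * a * vi) * x * (v * a * vi) := by
  have hx : fnConj (Kc := Kc) v vi hv1 hv2 x = x := fnConj_fixed hv1 hv2 hxv.symm
  calc x * (v * a * vi) * x = fnConj (Kc := Kc) v vi hv1 hv2 (x * a * x) := by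
        rw [map_mul, map_mul, hx, fnConj_apply]
    _ = fnConj (Kc := Kc) v vi hv1 hv2 (a * x * a) := by rw [hbr]
    _ = (v * a * vi) * x * (v * a * vi) := by rw [map_mul, map_mul, hx, fnConj_apply]

lemma fn_conjInv_eq {R : Type*} [Ring R] {u ui v vi : R} (hu1 : u * ui = 1)
    (hu2 : ui * u = 1) (hv1 : v * vi = 1) (hv2 : vi * v = 1)
    (hbr : u * v * u = v * u * v) :
    vi * u * v = u * v * ui := by
  apply fn_left_cancel hv2
  have e1 : v * (vi * u * v) = u * v := by
    rw [← mul_assoc, ← mul_assoc, hv1, one_mul]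
  have e2 : v * (u * v * ui) = u * v := by
    rw [← mul_assoc, ← mul_assoc, ← hbr, mul_assoc, hu1, mul_one]
  rw [e1, e2]

lemma fn_braid_key {Kc R : Type*} [CommRing Kc] [Ring R] [Algebra Kc R] {u ui v vi a : R} (hu1 : u * ui = 1) (hu2 : ui * u = 1)
    (hv1 : v * vi = 1) (hv2 : vi * v = 1)
    (hbr : u * v * u = v * u * v) (hua : u * a = a * u)
    (hva : v * a * v = a * v * a) :
    u * (v * a * vi) * u = (v * a * vi) * u * (v * a * vi) := by
  have hda : fnConj (Kc := Kc) u ui hu1 hu2 a = a := fnConj_fixed hu1 hu2 hua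
  have hw : fnConj (Kc := Kc) vi v hv2 hv1 u = fnConj (Kc := Kc) u ui hu1 hu2 v :=
    fn_conjInv_eq hu1 hu2 hv1 hv2 hbr
  have hcu : fnConj (Kc := Kc) v vi hv1 hv2 (fnConj (Kc := Kc) vi v hv2 hv1 u) = u :=
    fnConj_conj hv1 hv2 u
  have key : fnConj (Kc := Kc) vi v hv2 hv1 u * a * fnConj (Kc := Kc) vi v hv2 hv1 u
      = a * fnConj (Kc := Kc) vi v hv2 hv1 u * a := by
    rw [hw]
    calc fnConj (Kc := Kc) u ui hu1 hu2 v * a * fnConj (Kc := Kc) u ui hu1 hu2 v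
        = fnConj (Kc := Kc) u ui hu1 hu2 (v * a * v) := by rw [map_mul, map_mul, hda]
      _ = fnConj (Kc := Kc) u ui hu1 hu2 (a * v * a) := by rw [hva]
      _ = a * fnConj (Kc := Kc) u ui hu1 hu2 v * a := by rw [map_mul, map_mul, hda]
  calc u * (v * a * vi) * u
      = fnConj (Kc := Kc) v vi hv1 hv2
          (fnConj (Kc := Kc) vi v hv2 hv1 u * a * fnConj (Kc := Kc) vi v hv2 hv1 u) := by
        rw [map_mul, map_mul, hcu, fnConj_apply]
    _ = fnConj (Kc := Kc) v vi hv1 hv2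
          (a * fnConj (Kc := Kc) vi v hv2 hv1 u * a) := by rw [key]
    _ = (v * a * vi) * u * (v * a * vi) := by rw [map_mul, map_mul, hcu, fnConj_apply]

lemma fn_vel_key1 {Kc R : Type*} [CommRing Kc] [Ring R] [Algebra Kc R] {x v vi a : R} (hv1 : v * vi = 1) (hv2 : vi * v = 1)
    (hxv : x * v = v * x) (h : Vel x a = 0) : Vel x (v * a * vi) = 0 := by
  have hx : fnConj (Kc := Kc) v vi hv1 hv2 x = x := fnConj_fixed hv1 hv2 hxv.symm
  have key := fnMap_Vel (fnConj (Kc := Kc) v vi hv1 hv2) x a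
  rw [h, map_zero, hx, fnConj_apply] at key
  exact key.symm

lemma fn_vel_key2 {Kc R : Type*} [CommRing Kc] [Ring R] [Algebra Kc R] {u ui v vi a : R} (hu1 : u * ui = 1) (hu2 : ui * u = 1)
    (hv1 : v * vi = 1) (hv2 : vi * v = 1)
    (hbr : u * v * u = v * u * v) (hua : u * a = a * u)
    (h : Vel v a = 0) : Vel u (v * a * vi) = 0 := by
  have hda : fnConj (Kc := Kc) u ui hu1 hu2 a = a := fnConj_fixed hu1 hu2 hua
  have hw : fnConj (Kc := Kc) vi v hv2 hv1 u = fnConj (Kc := Kc) u ui hu1 hu2 v :=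
    fn_conjInv_eq hu1 hu2 hv1 hv2 hbr
  have hcu : fnConj (Kc := Kc) v vi hv1 hv2 (fnConj (Kc := Kc) vi v hv2 hv1 u) = u :=
    fnConj_conj hv1 hv2 u
  have e1 : Vel (fnConj (Kc := Kc) vi v hv2 hv1 u) a = 0 := by
    have key := fnMap_Vel (fnConj (Kc := Kc) u ui hu1 hu2) v a
    rw [h, map_zero, hda, ← hw] at key
    exact key.symm
  have key := fnMap_Vel (fnConj (Kc := Kc) v vi hv1 hv2) (fnConj (Kc := Kc) vi v hv2 hv1 u) a
  rw [e1, map_zero, hcu, fnConj_apply] at key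
  exact key.symm

end FnAuxGeneric

section FnAuxTL

lemma gg_quad (i : Fin (n + 1)) :
    gg K q n i * gg K q n i = (q - 1) • gg K q n i + algebraMap K _ q := by
  have h := RingQuot.mkAlgHom_rel K (ATLRel.quad (K := K) (q := q) (n := n) i)
  simpa [gg, map_mul, map_add, map_smul] using h

lemma gg_mul_ggInv [Invertible q] (i : Fin (n + 1)) :
    gg K q n i * ggInv K q n i = 1 := by
  rw [ggInv]; exact fn_quad_inv_right q (gg_quad K q n i)

lemma ggInv_mul_gg [Invertible q] (i : Fin (n + 1)) :
    ggInv K q n i * gg K q n i = 1 := by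
  rw [ggInv]; exact fn_quad_inv_left q (gg_quad K q n i)

lemma gg_comm_ss (i j : Fin (n + 1)) (hi : (i : ℕ) < n) (hj : (j : ℕ) < n)
    (hd : 2 ≤ Nat.dist (i : ℕ) (j : ℕ)) :
    gg K q n i * gg K q n j = gg K q n j * gg K q n i := by
  have h := RingQuot.mkAlgHom_rel K (ATLRel.comm_ss (K := K) (q := q) i j hi hj hd)
  simpa [gg, map_mul] using h

lemma gg_comm_sa (hn : 2 ≤ n) (i : Fin (n + 1)) (h1 : 1 ≤ (i : ℕ)) (h2 : (i : ℕ) + 2 ≤ n) :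
    gg K q n i * gg K q n (Fin.last n) = gg K q n (Fin.last n) * gg K q n i := by
  have h := RingQuot.mkAlgHom_rel K (ATLRel.comm_sa (K := K) (q := q) hn i h1 h2)
  simpa [gg, map_mul] using h

lemma gg_braid_ss (i j : Fin (n + 1)) (hj : (j : ℕ) < n) (hij : (j : ℕ) = (i : ℕ) + 1) :
    gg K q n i * gg K q n j * gg K q n i = gg K q n j * gg K q n i * gg K q n j := by
  have h := RingQuot.mkAlgHom_rel K (ATLRel.braid_ss (K := K) (q := q) i j hj hij)
  simpa [gg, map_mul] using h

lemma gg_braid_sa (hn : 2 ≤ n) (i : Fin (n + 1)) (h : (i : ℕ) = 0 ∨ (i : ℕ) + 1 = n) :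
    gg K q n i * gg K q n (Fin.last n) * gg K q n i
      = gg K q n (Fin.last n) * gg K q n i * gg K q n (Fin.last n) := by
  have h' := RingQuot.mkAlgHom_rel K (ATLRel.braid_sa (K := K) (q := q) hn i h)
  simpa [gg, map_mul] using h'

lemma gg_v_ss (i j : Fin (n + 1)) (hj : (j : ℕ) < n) (hij : (j : ℕ) = (i : ℕ) + 1) :
    Vel (gg K q n i) (gg K q n j) = 0 := by
  have h := RingQuot.mkAlgHom_rel K (ATLRel.v_ss (K := K) (q := q) i j hj hij)
  simpa [gg, Vel, map_add, map_mul] using h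

lemma gg_v_s1a (hn : 2 ≤ n) (i : Fin (n + 1)) (hi : (i : ℕ) = 0) :
    Vel (gg K q n i) (gg K q n (Fin.last n)) = 0 := by
  have h := RingQuot.mkAlgHom_rel K (ATLRel.v_s1a (K := K) (q := q) hn i hi)
  simpa [gg, Vel, map_add, map_mul] using h

lemma gg_v_sna (hn : 2 ≤ n) (i : Fin (n + 1)) (hi : (i : ℕ) + 1 = n) :
    Vel (gg K q n i) (gg K q n (Fin.last n)) = 0 := by
  have h := RingQuot.mkAlgHom_rel K (ATLRel.v_sna (K := K) (q := q) hn i hi)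
  simpa [gg, Vel, map_add, map_mul] using h

/-- The assignment of generators for `F_n`. -/
noncomputable def Fgen [Invertible q] (i : Fin (n - 1 + 1)) : TLhat K q n :=
  if h : (i : ℕ) < n - 1 then gg K q n ⟨i, by omega⟩
  else gg K q n (sigmaTop n) * gg K q n (Fin.last n) * ggInv K q n (sigmaTop n)

lemma Fgen_lt [Invertible q] {i : Fin (n - 1 + 1)} (h : (i : ℕ) < n - 1) :
    Fgen K q n i = gg K q n ⟨i, by omega⟩ := dif_pos h

lemma Fgen_last [Invertible q] {i : Fin (n - 1 + 1)} (h : ¬ (i : ℕ) < n - 1) :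
    Fgen K q n i
      = gg K q n (sigmaTop n) * gg K q n (Fin.last n) * ggInv K q n (sigmaTop n) :=
  dif_neg h

lemma fn_dist2 {a b : ℕ} (h : a + 2 ≤ b) : 2 ≤ Nat.dist a b := by
  have e : Nat.dist a b = a - b + (b - a) := rfl
  omega

lemma Fgen_rel [Invertible q] (hn : 2 ≤ n) {x y : FreeAlgebra K (Fin (n - 1 + 1))}
    (h : ATLRel K q (n - 1) x y) :
    FreeAlgebra.lift K (Fgen K q n) x = FreeAlgebra.lift K (Fgen K q n) y := by
  have hv1 : gg K q n (sigmaTop n) * ggInv K q n (sigmaTop n) = 1 :=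
    gg_mul_ggInv K q n _
  have hv2 : ggInv K q n (sigmaTop n) * gg K q n (sigmaTop n) = 1 :=
    ggInv_mul_gg K q n _
  induction h with
  | quad i =>
    simp only [map_mul, map_add, map_smul, AlgHom.commutes, FreeAlgebra.lift_ι_apply]
    by_cases hi : (i : ℕ) < n - 1
    · rw [Fgen_lt K q n hi]; exact gg_quad K q n _
    · rw [Fgen_last K q n hi]
      exact fn_quad_key q hv1 hv2 (gg_quad K q n (Fin.last n))
  | comm_ss i j hi hj hd =>
    simp only [map_mul, FreeAlgebra.lift_ι_apply]
    rw [Fgen_lt K q n hi, Fgen_lt K q n hj]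
    exact gg_comm_ss K q n ⟨i, by omega⟩ ⟨j, by omega⟩
      (show (i : ℕ) < n by omega) (show (j : ℕ) < n by omega) hd
  | comm_sa hn2 i h1 h2 =>
    simp only [map_mul, FreeAlgebra.lift_ι_apply]
    have hilt : (i : ℕ) < n - 1 := by omega
    have hlast : ¬ ((Fin.last (n - 1) : ℕ) < n - 1) := by simp
    rw [Fgen_lt K q n hilt, Fgen_last K q n hlast]
    have hxv : gg K q n ⟨i, by omega⟩ * gg K q n (sigmaTop n)
        = gg K q n (sigmaTop n) * gg K q n ⟨i, by omega⟩ :=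
      gg_comm_ss K q n _ _ (show (i : ℕ) < n by omega)
        (show n - 1 < n by omega) (fn_dist2 (show (i : ℕ) + 2 ≤ n - 1 by omega))
    have hxa : gg K q n ⟨i, by omega⟩ * gg K q n (Fin.last n)
        = gg K q n (Fin.last n) * gg K q n ⟨i, by omega⟩ :=
      gg_comm_sa K q n (by omega) _ h1 (show (i : ℕ) + 2 ≤ n by omega)
    exact fn_comm_key hxv hxa (fn_comm_inv hv1 hv2 hxv)
  | braid_ss i j hj hij =>
    simp only [map_mul, FreeAlgebra.lift_ι_apply]
    have hi : (i : ℕ) < n - 1 := by omega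
    rw [Fgen_lt K q n hi, Fgen_lt K q n hj]
    exact gg_braid_ss K q n ⟨i, by omega⟩ ⟨j, by omega⟩
      (show (j : ℕ) < n by omega) hij
  | braid_sa hn2 i h =>
    simp only [map_mul, FreeAlgebra.lift_ι_apply]
    have hilt : (i : ℕ) < n - 1 := by omega
    have hlast : ¬ ((Fin.last (n - 1) : ℕ) < n - 1) := by simp
    rw [Fgen_lt K q n hilt, Fgen_last K q n hlast]
    rcases h with h0 | h1
    · have hxv : gg K q n ⟨i, by omega⟩ * gg K q n (sigmaTop n)
          = gg K q n (sigmaTop n) * gg K q n ⟨i, by omega⟩ :=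
        gg_comm_ss K q n _ _ (show (i : ℕ) < n by omega)
          (show n - 1 < n by omega) (fn_dist2 (show (i : ℕ) + 2 ≤ n - 1 by omega))
      have hbr : gg K q n ⟨i, by omega⟩ * gg K q n (Fin.last n) * gg K q n ⟨i, by omega⟩
          = gg K q n (Fin.last n) * gg K q n ⟨i, by omega⟩ * gg K q n (Fin.last n) :=
        gg_braid_sa K q n (by omega) _ (Or.inl h0)
      exact fn_braid_key0 (Kc := K) hv1 hv2 hxv hbr
    · have hu1 : gg K q n ⟨i, by omega⟩ * ggInv K q n ⟨i, by omega⟩ = 1 :=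
        gg_mul_ggInv K q n _
      have hu2 : ggInv K q n ⟨i, by omega⟩ * gg K q n ⟨i, by omega⟩ = 1 :=
        ggInv_mul_gg K q n _
      have hbr : gg K q n ⟨i, by omega⟩ * gg K q n (sigmaTop n) * gg K q n ⟨i, by omega⟩
          = gg K q n (sigmaTop n) * gg K q n ⟨i, by omega⟩ * gg K q n (sigmaTop n) :=
        gg_braid_ss K q n _ _ (show n - 1 < n by omega)
          (show n - 1 = (i : ℕ) + 1 by omega)
      have hua : gg K q n ⟨i, by omega⟩ * gg K q n (Fin.last n)
          = gg K q n (Fin.last n) * gg K q n ⟨i, by omega⟩ :=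
        gg_comm_sa K q n (by omega) _ (show 1 ≤ (i : ℕ) by omega)
          (show (i : ℕ) + 2 ≤ n by omega)
      have hva : gg K q n (sigmaTop n) * gg K q n (Fin.last n) * gg K q n (sigmaTop n)
          = gg K q n (Fin.last n) * gg K q n (sigmaTop n) * gg K q n (Fin.last n) :=
        gg_braid_sa K q n (by omega) _ (Or.inr (show n - 1 + 1 = n by omega))
      exact fn_braid_key (Kc := K) hu1 hu2 hv1 hv2 hbr hua hva
  | v_ss i j hj hij =>
    simp only [Vel, map_mul, map_add, map_one, map_zero, FreeAlgebra.lift_ι_apply]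
    have hi : (i : ℕ) < n - 1 := by omega
    rw [Fgen_lt K q n hi, Fgen_lt K q n hj]
    exact gg_v_ss K q n ⟨i, by omega⟩ ⟨j, by omega⟩ (show (j : ℕ) < n by omega) hij
  | v_s1a hn2 i hi =>
    simp only [Vel, map_mul, map_add, map_one, map_zero, FreeAlgebra.lift_ι_apply]
    have hilt : (i : ℕ) < n - 1 := by omega
    have hlast : ¬ ((Fin.last (n - 1) : ℕ) < n - 1) := by simp
    rw [Fgen_lt K q n hilt, Fgen_last K q n hlast]
    have hxv : gg K q n ⟨i, by omega⟩ * gg K q n (sigmaTop n)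
        = gg K q n (sigmaTop n) * gg K q n ⟨i, by omega⟩ :=
      gg_comm_ss K q n _ _ (show (i : ℕ) < n by omega)
        (show n - 1 < n by omega) (fn_dist2 (show (i : ℕ) + 2 ≤ n - 1 by omega))
    have hvel : Vel (gg K q n ⟨i, by omega⟩) (gg K q n (Fin.last n)) = 0 :=
      gg_v_s1a K q n (by omega) _ hi
    exact fn_vel_key1 (Kc := K) hv1 hv2 hxv hvel
  | v_sna hn2 i hi =>
    simp only [Vel, map_mul, map_add, map_one, map_zero, FreeAlgebra.lift_ι_apply]
    have hilt : (i : ℕ) < n - 1 := by omega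
    have hlast : ¬ ((Fin.last (n - 1) : ℕ) < n - 1) := by simp
    rw [Fgen_lt K q n hilt, Fgen_last K q n hlast]
    have hu1 : gg K q n ⟨i, by omega⟩ * ggInv K q n ⟨i, by omega⟩ = 1 :=
      gg_mul_ggInv K q n _
    have hu2 : ggInv K q n ⟨i, by omega⟩ * gg K q n ⟨i, by omega⟩ = 1 :=
      ggInv_mul_gg K q n _
    have hbr : gg K q n ⟨i, by omega⟩ * gg K q n (sigmaTop n) * gg K q n ⟨i, by omega⟩
        = gg K q n (sigmaTop n) * gg K q n ⟨i, by omega⟩ * gg K q n (sigmaTop n) :=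
      gg_braid_ss K q n _ _ (show n - 1 < n by omega)
        (show n - 1 = (i : ℕ) + 1 by omega)
    have hua : gg K q n ⟨i, by omega⟩ * gg K q n (Fin.last n)
        = gg K q n (Fin.last n) * gg K q n ⟨i, by omega⟩ :=
      gg_comm_sa K q n (by omega) _ (show 1 ≤ (i : ℕ) by omega)
        (show (i : ℕ) + 2 ≤ n by omega)
    have hvel : Vel (gg K q n (sigmaTop n)) (gg K q n (Fin.last n)) = 0 :=
      gg_v_sna K q n (by omega) _ (show n - 1 + 1 = n by omega)
    exact fn_vel_key2 (Kc := K) hu1 hu2 hv1 hv2 hbr hua hvel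

end FnAuxTL

/-- For every `n ≥ 2` the assignments `t_{σ_i} ↦ g_{σ_i}` (`1 ≤ i ≤ n-1`)
and `t_{a_n} ↦ g_{σ_n} g_{a_{n+1}} g_{σ_n}⁻¹` extend to a unital `K`-algebra
homomorphism `F_n : TL̂_n(q) → TL̂_{n+1}(q)`. -/
theorem Fn_exists
    (K : Type*) [CommRing K] [IsDomain K] [CharZero K]
    (q sq : K) [Invertible q] [Invertible (q + 1)] (hsq : sq * sq = q)
    (n : ℕ) (hn : 2 ≤ n) :
    ∃ F : TLhat K q (n - 1) →ₐ[K] TLhat K q n, IsF K q n F := by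
  refine ⟨RingQuot.liftAlgHom K ⟨FreeAlgebra.lift K (Fgen K q n),
    fun x y h => Fgen_rel K q n hn h⟩, ?_, ?_⟩
  · intro i hi
    rw [gg, RingQuot.liftAlgHom_mkAlgHom_apply, FreeAlgebra.lift_ι_apply,
      Fgen_lt K q n hi]
    rfl
  · rw [gg, RingQuot.liftAlgHom_mkAlgHom_apply, FreeAlgebra.lift_ι_apply,
      Fgen_last K q n (by simp)]
end

section
/- For n ≥ 3, the square formed by the towers commutes: E_n ∘ F_n = ι ∘ E_{n−1}, where ι : TL_{n−1}(q) → TL_n(q) is the natural inclusion of the subalgebra generated by g_{σ_1},…,g_{σ_{n−1}} into the subalgebra generated by g_{σ_1},…,g_{σ_n}. -/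
open FreeAlgebra

variable (K : Type*) [CommRing K] (q : K) (n : ℕ)

/-!
On the generators `g_{σ_i}`, `i ≤ n - 2`, both `E_n ∘ F_n` and `ι ∘ E_{n-1}` are the identity.
On the affine generator, `E_n (F_n t_{a_n})` is the conjugate by `g_{σ_n}` of the chain
`g_{σ_1} ⋯ g_{σ_{n-1}} g_{σ_n} g_{σ_{n-1}}⁻¹ ⋯ g_{σ_1}⁻¹`. Since `g_{σ_n}` commutes with
`g_{σ_1}, …, g_{σ_{n-2}}`, the braid relation gives
`g_{σ_n} g_{σ_{n-1}} g_{σ_n} g_{σ_{n-1}}⁻¹ g_{σ_n}⁻¹ = g_{σ_{n-1}}`, so the conjugate is the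
shorter chain `g_{σ_1} ⋯ g_{σ_{n-2}} g_{σ_{n-1}} g_{σ_{n-2}}⁻¹ ⋯ g_{σ_1}⁻¹ = E_{n-1}(t_{a_n})`.
-/

section HeckeInverse

variable {R A : Type*} [CommRing R] [Ring A] [Algebra R A] (q : R) [Invertible q]

/-- By the quadratic relation `x² = (q - 1) x + q`, this is the inverse of `x`. -/
def heckeInv (x : A) : A :=
  ⅟q • (x - algebraMap R A (q - 1))

variable {q}

theorem mul_heckeInv {x : A} (hx : x * x = (q - 1) • x + algebraMap R A q) :
    x * heckeInv q x = 1 := by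
  rw [heckeInv, mul_smul_comm, mul_sub, hx, ← Algebra.commutes, ← Algebra.smul_def,
    add_sub_cancel_left, Algebra.algebraMap_eq_smul_one, smul_smul, invOf_mul_self, one_smul]

theorem Commute.heckeInv_right {x y : A} (h : Commute y x) : Commute y (heckeInv q x) :=
  (h.sub_right (Algebra.commutes _ y).symm).smul_right _

theorem AlgHom.map_heckeInv {B : Type*} [Ring B] [Algebra R B] (φ : A →ₐ[R] B) (x : A) :
    φ (heckeInv q x) = heckeInv q (φ x) := by
  rw [heckeInv, heckeInv, map_smul, map_sub, AlgHom.commutes]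

end HeckeInverse

section ConjChain

variable {M : Type*} [Monoid M]

def conjChain (f g : ℕ → M) (k : ℕ) : M :=
  (List.ofFn fun t : Fin k => f t).prod * f k * (List.ofFn fun t : Fin k => g (k - 1 - t)).prod

theorem conjChain_congr {f f' g g' : ℕ → M} {k : ℕ} (hf : ∀ i ≤ k, f i = f' i)
    (hg : ∀ i < k, g i = g' i) : conjChain f g k = conjChain f' g' k := by
  have hP : (List.ofFn fun t : Fin k => f t) = List.ofFn fun t => f' t :=
    List.ofFn_inj.mpr (funext fun t => hf t t.isLt.le)
  have hQ : (List.ofFn fun t : Fin k => g (k - 1 - t)) = List.ofFn fun t => g' (k - 1 - t) :=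
    List.ofFn_inj.mpr (funext fun t => hg _ (by have := t.isLt; omega))
  rw [conjChain, conjChain, hP, hQ, hf k le_rfl]

theorem map_conjChain {N G : Type*} [Monoid N] [FunLike G M N] [MonoidHomClass G M N] (φ : G)
    (f g : ℕ → M) (k : ℕ) :
    φ (conjChain f g k) = conjChain (fun i => φ (f i)) (fun i => φ (g i)) k := by
  simp only [conjChain, map_mul, map_list_prod, List.map_ofFn, Function.comp_def]

theorem conjChain_succ (f g : ℕ → M) (k : ℕ) :
    conjChain f g (k + 1) = (List.ofFn fun t : Fin k => f t).prod * f k * f (k + 1) *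
      (g k * (List.ofFn fun t : Fin k => g (k - 1 - t)).prod) := by
  have hQ : (List.ofFn fun t : Fin k => g (k - (t + 1))) =
      List.ofFn fun t : Fin k => g (k - 1 - t) :=
    List.ofFn_inj.mpr (funext fun t => congrArg g (by omega))
  rw [conjChain, List.ofFn_succ', List.prod_concat, List.ofFn_succ, List.prod_cons]
  simp only [Fin.val_last, Fin.val_castSucc, Fin.val_zero, Fin.val_succ, Nat.add_sub_cancel,
    Nat.sub_zero, hQ, mul_assoc]

/-- The braid relation turns `f (k+1) f k f (k+1) (f k)⁻¹` into `f k f (k+1)`, and `f (k+1)`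
commutes with the rest of the chain. -/
theorem mul_conjChain_succ_mul {f g : ℕ → M} {k : ℕ}
    (hf : ∀ i < k, Commute (f (k + 1)) (f i)) (hg : ∀ i < k, Commute (f (k + 1)) (g i))
    (hbraid : f k * f (k + 1) * f k = f (k + 1) * f k * f (k + 1))
    (hk : f k * g k = 1) (hk₁ : f (k + 1) * g (k + 1) = 1) :
    f (k + 1) * conjChain f g (k + 1) * g (k + 1) = conjChain f g k := by
  have hbraid' : f (k + 1) * f k * f (k + 1) * g k = f k * f (k + 1) := by
    rw [← hbraid, mul_assoc, hk, mul_one]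
  set c := f (k + 1)
  set P := (List.ofFn fun t : Fin k => f t).prod
  set Q := (List.ofFn fun t : Fin k => g (k - 1 - t)).prod
  have hP : Commute c P := Commute.list_prod_right _ _ fun x hx => by
    obtain ⟨t, rfl⟩ := List.mem_ofFn.mp hx
    exact hf t t.isLt
  have hQ : Commute c Q := Commute.list_prod_right _ _ fun x hx => by
    obtain ⟨t, rfl⟩ := List.mem_ofFn.mp hx
    exact hg _ (by omega)
  calc c * conjChain f g (k + 1) * g (k + 1)
      = P * (c * f k * c * g k) * Q * g (k + 1) := by
        rw [conjChain_succ]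
        change c * (P * f k * c * (g k * Q)) * g (k + 1) = _
        rw [mul_assoc P, mul_assoc P, ← mul_assoc c P, hP.eq]; simp only [mul_assoc]
    _ = P * f k * Q * (c * g (k + 1)) := by
        rw [hbraid', mul_assoc P, mul_assoc (f k), hQ.eq]
        simp only [mul_assoc]
    _ = conjChain f g k := by rw [hk₁, mul_one, conjChain]

end ConjChain

section TLhat

open Fin.NatCast

/-- `g_{σ_1} ⋯ g_{σ_k} g_{σ_{k+1}} g_{σ_k}⁻¹ ⋯ g_{σ_1}⁻¹`. -/
noncomputable def ggChain [Invertible q] (k : ℕ) : TLhat K q n :=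
  conjChain (fun i : ℕ => gg K q n i) (fun i => heckeInv q (gg K q n i)) k

noncomputable def sgenChain [NeZero n] [Invertible q] (k : ℕ) : TLsub K q n :=
  conjChain (fun i : ℕ => sgen K q n i) (fun i => heckeInv q (sgen K q n i)) k

variable {K q n}

theorem gg_mul_self (i : Fin (n + 1)) :
    gg K q n i * gg K q n i = (q - 1) • gg K q n i + algebraMap K (TLhat K q n) q := by
  simpa only [gg, map_mul, map_add, map_smul, AlgHom.commutes] using
    RingQuot.mkAlgHom_rel K (ATLRel.quad (q := q) i)

theorem gg_commute {i j : Fin (n + 1)} (hi : (i : ℕ) < n) (hj : (j : ℕ) < n)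
    (hd : 2 ≤ Nat.dist i j) : Commute (gg K q n i) (gg K q n j) := by
  have h := RingQuot.mkAlgHom_rel K (ATLRel.comm_ss (q := q) i j hi hj hd)
  simp only [map_mul] at h
  exact h

theorem gg_braid {i j : Fin (n + 1)} (hj : (j : ℕ) < n) (hij : (j : ℕ) = i + 1) :
    gg K q n i * gg K q n j * gg K q n i = gg K q n j * gg K q n i * gg K q n j := by
  simpa only [gg, map_mul] using RingQuot.mkAlgHom_rel K (ATLRel.braid_ss (q := q) i j hj hij)

theorem gg_natCast {i : ℕ} (h : i < n + 1) : gg K q n i = gg K q n ⟨i, h⟩ :=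
  congrArg _ (Fin.ext (Fin.val_cast_of_lt h))

theorem TLhat.algHom_ext {A : Type*} [Semiring A] [Algebra K A] {φ ψ : TLhat K q n →ₐ[K] A}
    (h : ∀ i, φ (gg K q n i) = ψ (gg K q n i)) : φ = ψ :=
  RingQuot.ringQuot_ext' K _ _ (FreeAlgebra.hom_ext (funext h))

variable [Invertible q]

theorem ggInv_eq_heckeInv (i : Fin (n + 1)) : ggInv K q n i = heckeInv q (gg K q n i) :=
  rfl

theorem EnTarget_eq_ggChain : EnTarget K q n = ggChain K q n (n - 1) := by
  have hP : (List.ofFn fun t : Fin (n - 1) =>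
      gg K q n (Fin.castLE (le_trans (Nat.sub_le n 1) (Nat.le_succ n)) t)) =
      List.ofFn fun t : Fin (n - 1) => gg K q n (t : ℕ) :=
    List.ofFn_inj.mpr (funext fun t => (gg_natCast (by omega)).symm)
  have hQ : (List.ofFn fun t : Fin (n - 1) => ggInv K q n ⟨n - 2 - (t : ℕ),
      Nat.lt_succ_of_le (le_trans (Nat.sub_le _ _) (Nat.sub_le _ _))⟩) =
      List.ofFn fun t : Fin (n - 1) => heckeInv q (gg K q n (n - 1 - 1 - t : ℕ)) :=
    List.ofFn_inj.mpr (funext fun t => by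
      rw [gg_natCast (by omega)]
      exact congrArg (ggInv K q n) (Fin.ext (by simp only; omega)))
  rw [EnTarget, ggChain, conjChain, hP, hQ, sigmaTop, gg_natCast (by omega)]

theorem gg_mul_ggChain_succ_mul {k : ℕ} (hk : k + 2 ≤ n) :
    gg K q n (k + 1 : ℕ) * ggChain K q n (k + 1) * heckeInv q (gg K q n (k + 1 : ℕ)) =
      ggChain K q n k := by
  have hfar : ∀ i < k, Commute (gg K q n (k + 1 : ℕ)) (gg K q n i) := fun i hi => by
    rw [gg_natCast (by omega), gg_natCast (by omega)]
    exact gg_commute (by simp only; omega) (by simp only; omega) (by simp only [Nat.dist]; omega)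
  have hbraid : gg K q n k * gg K q n (k + 1 : ℕ) * gg K q n k =
      gg K q n (k + 1 : ℕ) * gg K q n k * gg K q n (k + 1 : ℕ) := by
    rw [gg_natCast (by omega), gg_natCast (by omega)]
    exact gg_braid (by simp only; omega) rfl
  exact mul_conjChain_succ_mul (f := fun i : ℕ => gg K q n i)
    (g := fun i => heckeInv q (gg K q n i)) hfar (fun i hi => (hfar i hi).heckeInv_right) hbraid
    (mul_heckeInv (gg_mul_self _)) (mul_heckeInv (gg_mul_self _))

theorem map_sgenChain {m : ℕ} [NeZero m] (φ : TLsub K q m →ₐ[K] TLhat K q n) {k : ℕ} (hk : k < m)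
    (hφ : ∀ i : Fin m, φ (sgen K q m i) = gg K q n (i : ℕ)) :
    φ (sgenChain K q m k) = ggChain K q n k := by
  rw [sgenChain, map_conjChain]
  refine conjChain_congr (fun i hi => ?_) (fun i hi => ?_)
  · rw [hφ, Fin.val_cast_of_lt (by omega)]
  · exact (AlgHom.map_heckeInv (q := q) φ (sgen K q m i)).trans
      (by rw [hφ, Fin.val_cast_of_lt (by omega)])

theorem IsE.map_last [NeZero n] {E : TLhat K q n →ₐ[K] TLsub K q n} (hE : IsE K q n E) :
    E (gg K q n (Fin.last n)) = sgenChain K q n (n - 1) := by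
  refine Subtype.ext (hE.2.trans ((EnTarget_eq_ggChain).trans
    (map_sgenChain (TLsub K q n).val (Nat.sub_lt (NeZero.pos n) one_pos) fun i => ?_).symm))
  rw [gg_natCast (by omega)]
  rfl

theorem tower_square_gg_castSucc {F : TLhat K q (n - 1) →ₐ[K] TLhat K q n}
    {E : TLhat K q n →ₐ[K] TLsub K q n} {E' : TLhat K q (n - 1) →ₐ[K] TLsub K q (n - 1)}
    {incl : TLsub K q (n - 1) →ₐ[K] TLsub K q n} (hF : IsF K q n F) (hE : IsE K q n E)
    (hE' : IsE K q (n - 1) E')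
    (hincl : ∀ i : Fin (n - 1), (incl (sgen K q (n - 1) i) : TLhat K q n) =
      gg K q n (Fin.castSucc (Fin.castLE (Nat.sub_le n 1) i)))
    (i : Fin (n - 1)) :
    E (F (gg K q (n - 1) i.castSucc)) = incl (E' (gg K q (n - 1) i.castSucc)) := by
  have hE'i : E' (gg K q (n - 1) i.castSucc) = sgen K q (n - 1) i := Subtype.ext (hE'.1 i)
  rw [hF.1 _ i.isLt, hE'i]
  exact Subtype.ext ((hE.1 ⟨i, by omega⟩).trans (hincl i).symm)

theorem tower_square_gg_last {m : ℕ} {F : TLhat K q (m + 3 - 1) →ₐ[K] TLhat K q (m + 3)}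
    {E : TLhat K q (m + 3) →ₐ[K] TLsub K q (m + 3)}
    {E' : TLhat K q (m + 3 - 1) →ₐ[K] TLsub K q (m + 3 - 1)}
    {incl : TLsub K q (m + 3 - 1) →ₐ[K] TLsub K q (m + 3)}
    (hF : IsF K q (m + 3) F) (hE : IsE K q (m + 3) E) (hE' : IsE K q (m + 3 - 1) E')
    (hincl : ∀ i : Fin (m + 3 - 1), (incl (sgen K q (m + 3 - 1) i) : TLhat K q (m + 3)) =
      gg K q (m + 3) (Fin.castSucc (Fin.castLE (Nat.sub_le (m + 3) 1) i))) :
    E (F (gg K q (m + 3 - 1) (Fin.last (m + 3 - 1)))) =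
      incl (E' (gg K q (m + 3 - 1) (Fin.last (m + 3 - 1)))) := by
  have : NeZero (m + 3 - 1) := ⟨by omega⟩
  have hσ : (E (gg K q (m + 3) (sigmaTop (m + 3))) : TLhat K q (m + 3)) =
      gg K q (m + 3) (m + 1 + 1 : ℕ) :=
    (hE.1 ⟨m + 2, by omega⟩).trans (gg_natCast (by omega)).symm
  apply Subtype.ext
  calc (E (F (gg K q (m + 3 - 1) (Fin.last (m + 3 - 1)))) : TLhat K q (m + 3))
      = gg K q (m + 3) (m + 1 + 1 : ℕ) * ggChain K q (m + 3) (m + 1 + 1) *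
          heckeInv q (gg K q (m + 3) (m + 1 + 1 : ℕ)) := by
        change (TLsub K q (m + 3)).val.comp E (F _) = _
        rw [hF.2, map_mul, map_mul, ggInv_eq_heckeInv, AlgHom.map_heckeInv]
        simp only [AlgHom.comp_apply, Subalgebra.coe_val]
        rw [hσ, hE.2, EnTarget_eq_ggChain]
        rfl
    _ = ggChain K q (m + 3) (m + 1) := gg_mul_ggChain_succ_mul le_rfl
    _ = incl (E' (gg K q (m + 3 - 1) (Fin.last (m + 3 - 1)))) := by
        rw [hE'.map_last]
        refine (map_sgenChain ((TLsub K q (m + 3)).val.comp incl) (by omega) fun i => ?_).symm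
        exact (hincl i).trans (gg_natCast (by omega)).symm

end TLhat

theorem tower_square_commutes_general
    (K : Type*) [CommRing K]
    (q : K) [Invertible q]
    (n : ℕ) (hn : 3 ≤ n)
    (F : TLhat K q (n - 1) →ₐ[K] TLhat K q n) (hF : IsF K q n F)
    (E : TLhat K q n →ₐ[K] TLsub K q n) (hE : IsE K q n E)
    (E' : TLhat K q (n - 1) →ₐ[K] TLsub K q (n - 1)) (hE' : IsE K q (n - 1) E')
    (incl : TLsub K q (n - 1) →ₐ[K] TLsub K q n)
    (hincl : ∀ i : Fin (n - 1),
      (incl (sgen K q (n - 1) i) : TLhat K q n) =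
        gg K q n (Fin.castSucc (Fin.castLE (Nat.sub_le n 1) i))) :
    ∀ x : TLhat K q (n - 1), E (F x) = incl (E' x) := by
  obtain ⟨m, rfl⟩ : ∃ m, n = m + 3 := ⟨n - 3, by omega⟩
  have h : E.comp F = incl.comp E' := TLhat.algHom_ext fun i => by
    rcases Fin.eq_castSucc_or_eq_last i with ⟨i, rfl⟩ | rfl
    · exact tower_square_gg_castSucc hF hE hE' hincl i
    · exact tower_square_gg_last hF hE hE' hincl
  exact fun x => DFunLike.congr_fun h x

/-- for `n ≥ 3` the square formed by the towers commutes: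
`E_n ∘ F_n = ι ∘ E_{n-1}`, where `ι : TL_{n-1}(q) → TL_n(q)` is the natural inclusion
sending `g_{σ_i}` to `g_{σ_i}`. -/
theorem tower_square_commutes
    (K : Type*) [CommRing K] [IsDomain K] [CharZero K]
    (q sq : K) [Invertible q] [Invertible (q + 1)] (hsq : sq * sq = q)
    (n : ℕ) (hn : 3 ≤ n)
    (F : TLhat K q (n - 1) →ₐ[K] TLhat K q n) (hF : IsF K q n F)
    (E : TLhat K q n →ₐ[K] TLsub K q n) (hE : IsE K q n E)
    (E' : TLhat K q (n - 1) →ₐ[K] TLsub K q (n - 1)) (hE' : IsE K q (n - 1) E')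
    (incl : TLsub K q (n - 1) →ₐ[K] TLsub K q n)
    (hincl : ∀ i : Fin (n - 1),
      (incl (sgen K q (n - 1) i) : TLhat K q n) =
        gg K q n (Fin.castSucc (Fin.castLE (Nat.sub_le n 1) i))) :
    ∀ x : TLhat K q (n - 1), E (F x) = incl (E' x) :=
  tower_square_commutes_general K q n hn F hF E hE E' hE' incl hincl
end
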